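/- Let Ω be a quasi-product with quasi-factors Λ and Γ. For composable paths p = p¹p² ∈ G(Λ)* and q = q¹q² ∈ G(Γ)*, the induced path actions satisfy p_▷(q¹q²) = (p_▷(q¹)) · ((q¹_◁(p))_▷(q²)) and q_◁(p¹p²) = ((p²_▷(q))_◁(p¹)) · (q_◁(p²)). -/

import Mathlib

/-- An edge-colored directed graph with `k` colors. -/
structure ColoredGraph (k : ℕ) where
  V : Type
  E : Type
  es : E → V
  er : E → V
  color : E → Fin k

namespace ColoredGraph

variable {k k₁ k₂ : ℕ}

/-- A (possibly empty) path in a colored graph: a base (source) vertex together with a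
composable list of edges, listed from the range end (head of the list is the last edge
traversed). -/
structure Pth (G : ColoredGraph k) where
  base : G.V
  edges : List G.E
  chain : edges.Chain' fun e f => G.es e = G.er f
  base_src : ∀ e ∈ edges.getLast?, G.es e = base

namespace Pth

variable {G : ColoredGraph k}

/-- The source of a path. -/
def s (p : G.Pth) : G.V := p.base

/-- The range of a path. -/
def r (p : G.Pth) : G.V := (p.edges.head?.map G.er).getD p.base

/-- The color order of a path. -/
def colors (p : G.Pth) : List (Fin k) := p.edges.map G.color

end Pth

/-- `G.IsComp p q pq` means that `pq` is the composite path "first `q`, then `p`"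
(written `pq = p q` in range-on-the-left notation). -/
def IsComp (G : ColoredGraph k) (p q pq : G.Pth) : Prop :=
  p.s = q.r ∧ pq.base = q.base ∧ pq.edges = p.edges ++ q.edges

/-- A factorization rule on the path category of a colored graph: a source-, range- and
color-order-compatible equivalence relation which respects composition (KG0) and such that
every equivalence class contains exactly one path of each permuted color order (KG4).
The quotient is then a `k`-graph. -/
structure FactRule (G : ColoredGraph k) where
  rel : G.Pth → G.Pth → Prop
  iseqv : Equivalence rel
  s_eq : ∀ p q, rel p q → p.s = q.s
  r_eq : ∀ p q, rel p q → p.r = q.r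
  kg0 : ∀ p p' q q' pq p'q', rel p p' → rel q q' →
    G.IsComp p q pq → G.IsComp p' q' p'q' → rel pq p'q'
  kg4 : ∀ (p : G.Pth) (l : List (Fin k)), l.Perm p.colors →
    ∃! q : G.Pth, rel p q ∧ q.colors = l

/-- The Cartesian (box) product of colored graphs. -/
def prodG (G₁ : ColoredGraph k₁) (G₂ : ColoredGraph k₂) : ColoredGraph (k₁ + k₂) where
  V := G₁.V × G₂.V
  E := G₁.E × G₂.V ⊕ G₁.V × G₂.E
  es e := match e with
    | .inl (e, w) => (G₁.es e, w)
    | .inr (v, f) => (v, G₂.es f)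
  er e := match e with
    | .inl (e, w) => (G₁.er e, w)
    | .inr (v, f) => (v, G₂.er f)
  color e := match e with
    | .inl (e, _) => Fin.castAdd k₂ (G₁.color e)
    | .inr (_, f) => Fin.natAdd k₁ (G₂.color f)

/-- The lift of a path of `G₁` to the slice `G₁ × {w}` of the product graph. -/
def lift₁ {G₁ : ColoredGraph k₁} {G₂ : ColoredGraph k₂} (w : G₂.V) (p : G₁.Pth) :
    (prodG G₁ G₂).Pth where
  base := (p.base, w)
  edges := p.edges.map fun e => Sum.inl (e, w)
  chain := by
    refine (List.isChain_map _).2 ?_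
    refine List.IsChain.imp ?_ p.chain
    intro a b h
    show ((G₁.es a, w) : G₁.V × G₂.V) = (G₁.er b, w)
    rw [h]
  base_src := by
    intro e he
    have h : Option.map (fun a => (Sum.inl (a, w) : (prodG G₁ G₂).E)) p.edges.getLast? = some e := by
      rw [← List.getLast?_map]; exact he
    obtain ⟨a, ha, rfl⟩ := Option.map_eq_some_iff.1 h
    show ((G₁.es a, w) : G₁.V × G₂.V) = (p.base, w)
    rw [p.base_src a ha]

/-- The lift of a path of `G₂` to the slice `{x} × G₂` of the product graph. -/
def lift₂ {G₁ : ColoredGraph k₁} {G₂ : ColoredGraph k₂} (x : G₁.V) (q : G₂.Pth) :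
    (prodG G₁ G₂).Pth where
  base := (x, q.base)
  edges := q.edges.map fun f => Sum.inr (x, f)
  chain := by
    refine (List.isChain_map _).2 ?_
    refine List.IsChain.imp ?_ q.chain
    intro a b h
    show ((x, G₂.es a) : G₁.V × G₂.V) = (x, G₂.er b)
    rw [h]
  base_src := by
    intro e he
    have h : Option.map (fun a => (Sum.inr (x, a) : (prodG G₁ G₂).E)) q.edges.getLast? = some e := by
      rw [← List.getLast?_map]; exact he
    obtain ⟨a, ha, rfl⟩ := Option.map_eq_some_iff.1 h
    show ((x, G₂.es a) : G₁.V × G₂.V) = (x, q.base)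
    rw [q.base_src a ha]

/-- The underlying undirected graph is connected. -/
def Connected (G : ColoredGraph k) : Prop :=
  ∀ a b : G.V,
    Relation.ReflTransGen
      (fun u v => ∃ e : G.E, (G.es e = u ∧ G.er e = v) ∨ (G.es e = v ∧ G.er e = u)) a b

/-- Row-finiteness at the level of the one-skeleton: for each vertex and color order there
are only finitely many paths into that vertex with that color order. -/
def RowFinite (G : ColoredGraph k) : Prop :=
  ∀ (v : G.V) (l : List (Fin k)), {p : G.Pth | p.r = v ∧ p.colors = l}.Finite

/-- A vertex-fixing automorphism of a colored graph. -/
def VertexFixingAut (G : ColoredGraph k) (F : G.E → G.E) : Prop :=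
  Function.Bijective F ∧
    ∀ e, G.es (F e) = G.es e ∧ G.er (F e) = G.er e ∧ G.color (F e) = G.color e

end ColoredGraph

open ColoredGraph

/-- A quasi-product `(k₁+k₂)`-graph: its one-skeleton is the product of the one-skeletons of
`Λ = (G₁, rLam)` and `Γ = (G₂, rGam)`, i.e. the quasi-product is given by a factorization
rule `rOmega` on the product graph; the quasi-factors embed as the slices at `base₂`
resp. `base₁` (the injective degree-compatible functors `ψ₁, ψ₂`). -/
structure QuasiProduct (k₁ k₂ : ℕ) where
  G₁ : ColoredGraph k₁
  G₂ : ColoredGraph k₂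
  rLam : G₁.FactRule
  rGam : G₂.FactRule
  rOmega : (prodG G₁ G₂).FactRule
  base₁ : G₁.V
  base₂ : G₂.V
  emb₁ : ∀ p q : G₁.Pth, rLam.rel p q ↔ rOmega.rel (lift₁ base₂ p) (lift₁ base₂ q)
  emb₂ : ∀ p q : G₂.Pth, rGam.rel p q ↔ rOmega.rel (lift₂ base₁ p) (lift₂ base₁ q)

variable {k₁ k₂ : ℕ}

/-- `ActsTo R p q q' p'` expresses, for a factorization rule `R` on the product graph, that
the Zappa–Szép actions of the associated matched pair satisfy `p ▷ q = q'` and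
`q ◁ p = p'`; that is, `([p], r q)(s p, [q]) = (r p, [q'])([p'], s q)`, with `q'` and `p'`
of the same color order as `q` and `p`. -/
def ActsTo {G₁ : ColoredGraph k₁} {G₂ : ColoredGraph k₂}
    (R : (prodG G₁ G₂).FactRule) (p : G₁.Pth) (q : G₂.Pth)
    (q' : G₂.Pth) (p' : G₁.Pth) : Prop :=
  ∃ lhs rhs : (prodG G₁ G₂).Pth,
    (prodG G₁ G₂).IsComp (lift₁ q.r p) (lift₂ p.s q) lhs ∧
    (prodG G₁ G₂).IsComp (lift₂ p.r q') (lift₁ q.s p') rhs ∧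
    R.rel lhs rhs ∧ q'.colors = q.colors ∧ p'.colors = p.colors

/-- The quasi-factor `Γ` of a quasi-product is *stable* if the left action is trivial:
`p ▷ q = q` for all paths. -/
def QuasiProduct.Stable (Q : QuasiProduct k₁ k₂) : Prop :=
  ∀ (p : Q.G₁.Pth) (q q' : Q.G₂.Pth) (p' : Q.G₁.Pth),
    ActsTo Q.rOmega p q q' p' → q' = q

/-- The factorization rule of the slice `Ω₁^w`, i.e. the rule induced on `G₁`-paths by the
slice `G₁ × {w}` of the quasi-product. -/
def QuasiProduct.relAt₁ (Q : QuasiProduct k₁ k₂) (w : Q.G₂.V) (p p' : Q.G₁.Pth) : Prop :=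
  Q.rOmega.rel (lift₁ w p) (lift₁ w p')

/-- The factorization rule of the slice `Ω₂^x`. -/
def QuasiProduct.relAt₂ (Q : QuasiProduct k₁ k₂) (x : Q.G₁.V) (q q' : Q.G₂.Pth) : Prop :=
  Q.rOmega.rel (lift₂ x q) (lift₂ x q')

/-- `F` implements a (vertex- and color-preserving) isomorphism from the quotient
`k`-graph `G*/R` to `G*/S`. -/
def RelIsoVia (G : ColoredGraph k) (R S : G.Pth → G.Pth → Prop) (F : G.Pth → G.Pth) :
    Prop :=
  (∀ p, (F p).s = p.s ∧ (F p).r = p.r ∧ (F p).colors = p.colors) ∧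
  (∀ p p', R p p' ↔ S (F p) (F p')) ∧
  (∀ p', ∃ p, S (F p) p') ∧
  (∀ p1 p2 p c, G.IsComp p1 p2 p → G.IsComp (F p1) (F p2) c → S (F p) c)

/-- An isomorphism of the `k`-graphs determined by two factorization rules on the same
colored graph, given by a vertex bijection `θV` and a map on paths `θP`. -/
def IsoOfRules {k : ℕ} (G : ColoredGraph k) (R S : G.FactRule)
    (θV : G.V → G.V) (θP : G.Pth → G.Pth) : Prop :=
  Function.Bijective θV ∧
  (∀ p, (θP p).s = θV p.s ∧ (θP p).r = θV p.r ∧ (θP p).colors = p.colors) ∧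
  (∀ p p', R.rel p p' ↔ S.rel (θP p) (θP p')) ∧
  (∀ q, ∃ p, S.rel (θP p) q) ∧
  (∀ p1 p2 p c, G.IsComp p1 p2 p → G.IsComp (θP p1) (θP p2) c → S.rel (θP p) c)

/-- `S` is the product factorization rule of `Λ = (G₁, rLam)` and `Γ = (G₂, rGam)`: its
slices are given by the factor rules and both Zappa–Szép actions are trivial. -/
def IsProductRule (G₁ : ColoredGraph k₁) (G₂ : ColoredGraph k₂)
    (rLam : G₁.FactRule) (rGam : G₂.FactRule) (S : (prodG G₁ G₂).FactRule) : Prop :=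
  (∀ (w : G₂.V) (p p' : G₁.Pth), rLam.rel p p' ↔ S.rel (lift₁ w p) (lift₁ w p')) ∧
  (∀ (x : G₁.V) (q q' : G₂.Pth), rGam.rel q q' ↔ S.rel (lift₂ x q) (lift₂ x q')) ∧
  (∀ (p : G₁.Pth) (q q' : G₂.Pth) (p' : G₁.Pth),
    ActsTo S p q q' p' → q' = q ∧ p' = p)

/-!
Both identities come from pasting commuting squares in `Ω`. The defining square
`([p], r q¹)(s p, [q¹]) = (r p, [p ▷ q¹])([q¹ ◁ p], s q¹)` and the defining square of
`(q¹ ◁ p) ▷ q²` share the edge `[q¹ ◁ p]`, so placing them side by side and using (KG0)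
gives a square for `p` and `q¹q²`. Stacking the squares of `p² ▷ q` and `p¹ ▷ (p² ▷ q)` gives
the second identity in the same way.
-/

namespace ColoredGraph

variable {k k₁ k₂ : ℕ}

section Paths

variable {G : ColoredGraph k}

theorem Pth.r_of_edges_eq_nil {p : G.Pth} (h : p.edges = []) : p.r = p.base := by
  simp [Pth.r, h]

theorem Pth.r_of_edges_eq_cons {p : G.Pth} {e : G.E} {t : List G.E} (h : p.edges = e :: t) :
    p.r = G.er e := by
  simp [Pth.r, h]

theorem IsComp.s_eq {p q pq : G.Pth} (h : G.IsComp p q pq) : pq.s = q.s := h.2.1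

theorem IsComp.r_eq {p q pq : G.Pth} (h : G.IsComp p q pq) : pq.r = p.r := by
  obtain ⟨hpq, hbase, hedges⟩ := h
  cases hp : p.edges with
  | nil =>
    have hr : pq.r = q.r := by
      unfold Pth.r
      rw [hedges, hp, List.nil_append, hbase]
    rw [hr, ← hpq, Pth.s, Pth.r_of_edges_eq_nil hp]
  | cons e t =>
    rw [Pth.r_of_edges_eq_cons (by rw [hedges, hp, List.cons_append]), Pth.r_of_edges_eq_cons hp]

theorem IsComp.colors_eq {p q pq : G.Pth} (h : G.IsComp p q pq) :
    pq.colors = p.colors ++ q.colors := by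
  simp [Pth.colors, h.2.2]

theorem exists_isComp {p q : G.Pth} (h : p.s = q.r) : ∃ pq, G.IsComp p q pq := by
  refine ⟨⟨q.base, p.edges ++ q.edges, p.chain.append q.chain ?_, ?_⟩, h, rfl, rfl⟩
  · intro e he f hf
    rw [p.base_src e he, ← Pth.s, h,
      Pth.r_of_edges_eq_cons (List.head?_eq_some_iff.mp hf).choose_spec]
  · intro e he
    cases hq : q.edges with
    | nil =>
      rw [hq, List.append_nil] at he
      rw [p.base_src e he, ← Pth.s, h, Pth.r_of_edges_eq_nil hq]
    | cons f t =>
      rw [hq, List.getLast?_append_cons] at he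
      exact q.base_src e (by rw [hq]; exact he)

theorem IsComp.assoc {a b c ab bc abc : G.Pth} (hab : G.IsComp a b ab)
    (hbc : G.IsComp b c bc) (h : G.IsComp ab c abc) : G.IsComp a bc abc :=
  ⟨by rw [hbc.r_eq, hab.1], by rw [h.2.1, hbc.2.1],
    by rw [h.2.2, hab.2.2, hbc.2.2, List.append_assoc]⟩

theorem IsComp.assoc_symm {a b c ab bc abc : G.Pth} (hab : G.IsComp a b ab)
    (hbc : G.IsComp b c bc) (h : G.IsComp a bc abc) : G.IsComp ab c abc :=
  ⟨by rw [hab.s_eq, hbc.1], by rw [h.2.1, hbc.2.1],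
    by rw [h.2.2, hbc.2.2, hab.2.2, List.append_assoc]⟩

end Paths

namespace FactRule

variable {G : ColoredGraph k} (R : G.FactRule)

theorem rel_of_isComp_left {a a' b ab a'b : G.Pth} (h : R.rel a a') (hab : G.IsComp a b ab)
    (ha'b : G.IsComp a' b a'b) : R.rel ab a'b :=
  R.kg0 _ _ _ _ _ _ h (R.iseqv.refl b) hab ha'b

theorem rel_of_isComp_right {a b b' ab ab' : G.Pth} (h : R.rel b b') (hab : G.IsComp a b ab)
    (hab' : G.IsComp a b' ab') : R.rel ab ab' :=
  R.kg0 _ _ _ _ _ _ (R.iseqv.refl a) h hab hab'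

/-- A commuting square `ab = cd` in the `k`-graph. -/
def RelComp (a b c d : G.Pth) : Prop :=
  ∃ ab cd, G.IsComp a b ab ∧ G.IsComp c d cd ∧ R.rel ab cd

variable {R}

theorem RelComp.s_eq {a b c d : G.Pth} (h : R.RelComp a b c d) : d.s = b.s := by
  obtain ⟨ab, cd, hab, hcd, hrel⟩ := h
  rw [← hab.s_eq, ← hcd.s_eq, R.s_eq _ _ hrel]

theorem RelComp.r_eq {a b c d : G.Pth} (h : R.RelComp a b c d) : c.r = a.r := by
  obtain ⟨ab, cd, hab, hcd, hrel⟩ := h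
  rw [← hab.r_eq, ← hcd.r_eq, R.r_eq _ _ hrel]

theorem RelComp.horiz_comp {a b₁ b₂ b c₁ c₂ c d₁ d₂ : G.Pth} (h₁ : R.RelComp a b₁ c₁ d₁)
    (h₂ : R.RelComp d₁ b₂ c₂ d₂) (hb : G.IsComp b₁ b₂ b) (hc : G.IsComp c₁ c₂ c) :
    R.RelComp a b c d₂ := by
  obtain ⟨ab₁, c₁d₁, hab₁, hc₁d₁, hrel₁⟩ := h₁
  obtain ⟨d₁b₂, c₂d₂, hd₁b₂, hc₂d₂, hrel₂⟩ := h₂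
  obtain ⟨ab, hab⟩ := exists_isComp (hab₁.1.trans hb.r_eq.symm)
  obtain ⟨c₁d₁b₂, hc₁d₁b₂⟩ := exists_isComp (hc₁d₁.s_eq.trans hd₁b₂.1)
  obtain ⟨cd₂, hcd₂⟩ := exists_isComp (hc.s_eq.trans hc₂d₂.1)
  have hc₁c₂d₂ : G.IsComp c₁ c₂d₂ cd₂ := hc.assoc hc₂d₂ hcd₂
  have step₁ : R.rel ab c₁d₁b₂ :=
    R.rel_of_isComp_left hrel₁ (hab₁.assoc_symm hb hab) hc₁d₁b₂
  have step₂ : R.rel c₁d₁b₂ cd₂ :=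
    R.rel_of_isComp_right hrel₂ (hc₁d₁.assoc hd₁b₂ hc₁d₁b₂) hc₁c₂d₂
  exact ⟨ab, cd₂, hab, hcd₂, R.iseqv.trans step₁ step₂⟩

theorem RelComp.vert_comp {a₁ a₂ a b c e d₁ d₂ d : G.Pth} (h₂ : R.RelComp a₂ b c d₂)
    (h₁ : R.RelComp a₁ c e d₁) (ha : G.IsComp a₁ a₂ a) (hd : G.IsComp d₁ d₂ d) :
    R.RelComp a b e d := by
  obtain ⟨a₂b, cd₂, ha₂b, hcd₂, hrel₂⟩ := h₂
  obtain ⟨a₁c, ed₁, ha₁c, hed₁, hrel₁⟩ := h₁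
  obtain ⟨ab, hab⟩ := exists_isComp (ha.s_eq.trans ha₂b.1)
  obtain ⟨a₁cd₂, ha₁cd₂⟩ := exists_isComp (ha₁c.1.trans hcd₂.r_eq.symm)
  obtain ⟨ed, hed⟩ := exists_isComp (hed₁.1.trans hd.r_eq.symm)
  have ha₁c_d₂ : G.IsComp a₁c d₂ a₁cd₂ := ha₁c.assoc_symm hcd₂ ha₁cd₂
  have step₁ : R.rel ab a₁cd₂ :=
    R.rel_of_isComp_right hrel₂ (ha.assoc ha₂b hab) ha₁cd₂
  have step₂ : R.rel a₁cd₂ ed :=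
    R.rel_of_isComp_left hrel₁ ha₁c_d₂ (hed₁.assoc_symm hd hed)
  exact ⟨ab, ed, hab, hed, R.iseqv.trans step₁ step₂⟩

end FactRule

section Product

variable {G₁ : ColoredGraph k₁} {G₂ : ColoredGraph k₂}

theorem lift₁_s (w : G₂.V) (p : G₁.Pth) : (lift₁ w p).s = (p.s, w) := rfl

theorem lift₂_s (x : G₁.V) (q : G₂.Pth) : (lift₂ x q).s = (x, q.s) := rfl

theorem lift₁_r (w : G₂.V) (p : G₁.Pth) : (lift₁ w p).r = (p.r, w) := by
  cases h : p.edges with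
  | nil => simp only [Pth.r, lift₁, h, List.head?_nil, Option.map_none, Option.getD_none]; rfl
  | cons e t => simp [lift₁, Pth.r, h, prodG]

theorem lift₂_r (x : G₁.V) (q : G₂.Pth) : (lift₂ x q).r = (x, q.r) := by
  cases h : q.edges with
  | nil => simp only [Pth.r, lift₂, h, List.head?_nil, Option.map_none, Option.getD_none]; rfl
  | cons e t => simp [lift₂, Pth.r, h, prodG]

theorem IsComp.lift₁ {p₁ p₂ p : G₁.Pth} (w : G₂.V) (h : G₁.IsComp p₁ p₂ p) :
    (prodG G₁ G₂).IsComp (lift₁ w p₁) (lift₁ w p₂) (lift₁ w p) :=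
  ⟨by rw [lift₁_s, lift₁_r, h.1], congrArg (·, w) h.2.1,
    by simp only [ColoredGraph.lift₁, h.2.2]; exact List.map_append⟩

theorem IsComp.lift₂ {q₁ q₂ q : G₂.Pth} (x : G₁.V) (h : G₂.IsComp q₁ q₂ q) :
    (prodG G₁ G₂).IsComp (lift₂ x q₁) (lift₂ x q₂) (lift₂ x q) :=
  ⟨by rw [lift₂_s, lift₂_r, h.1], congrArg (x, ·) h.2.1,
    by simp only [ColoredGraph.lift₂, h.2.2]; exact List.map_append⟩

end Product

end ColoredGraph

open ColoredGraph

section Actions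

variable {G₁ : ColoredGraph k₁} {G₂ : ColoredGraph k₂} {R : (prodG G₁ G₂).FactRule}

theorem actsTo_iff {p p' : G₁.Pth} {q q' : G₂.Pth} :
    ActsTo R p q q' p' ↔ R.RelComp (lift₁ q.r p) (lift₂ p.s q) (lift₂ p.r q') (lift₁ q.s p') ∧
      q'.colors = q.colors ∧ p'.colors = p.colors :=
  ⟨fun ⟨l, r, hl, hr, hrel, hq, hp⟩ => ⟨⟨l, r, hl, hr, hrel⟩, hq, hp⟩,
    fun ⟨⟨l, r, hl, hr, hrel⟩, hq, hp⟩ => ⟨l, r, hl, hr, hrel, hq, hp⟩⟩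

theorem ActsTo.s_eq_left {p p' : G₁.Pth} {q q' : G₂.Pth} (h : ActsTo R p q q' p') :
    p'.s = p.s :=
  congrArg Prod.fst (actsTo_iff.1 h).1.s_eq

theorem ActsTo.r_eq_left {p p' : G₁.Pth} {q q' : G₂.Pth} (h : ActsTo R p q q' p') :
    p'.r = p.r := by
  obtain ⟨_, _, _, ⟨hsr, _⟩, _⟩ := h
  rw [lift₂_s, lift₁_r] at hsr
  exact (congrArg Prod.fst hsr).symm

theorem ActsTo.s_eq_right {p p' : G₁.Pth} {q q' : G₂.Pth} (h : ActsTo R p q q' p') :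
    q'.s = q.s := by
  obtain ⟨_, _, _, ⟨hsr, _⟩, _⟩ := h
  rw [lift₂_s, lift₁_r] at hsr
  exact congrArg Prod.snd hsr

theorem ActsTo.r_eq_right {p p' : G₁.Pth} {q q' : G₂.Pth} (h : ActsTo R p q q' p') :
    q'.r = q.r := by
  have h' := (actsTo_iff.1 h).1.r_eq
  rw [lift₂_r, lift₁_r] at h'
  exact congrArg Prod.snd h'

theorem ActsTo.comp_right {p p₁' p₂' : G₁.Pth} {q₁ q₂ q q₁' q₂' q' : G₂.Pth}
    (hq : G₂.IsComp q₁ q₂ q) (h₁ : ActsTo R p q₁ q₁' p₁') (h₂ : ActsTo R p₁' q₂ q₂' p₂')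
    (hq' : G₂.IsComp q₁' q₂' q') : ActsTo R p q q' p₂' := by
  obtain ⟨sq₁, hq₁', hp₁'⟩ := actsTo_iff.1 h₁
  obtain ⟨sq₂, hq₂', hp₂'⟩ := actsTo_iff.1 h₂
  rw [← hq.r_eq] at sq₁
  rw [h₁.s_eq_left, h₁.r_eq_left, ← hq.1, ← hq.s_eq] at sq₂
  refine actsTo_iff.2 ⟨sq₁.horiz_comp sq₂ (hq.lift₂ p.s) (hq'.lift₂ p.r), ?_, hp₂'.trans hp₁'⟩
  rw [hq'.colors_eq, hq.colors_eq, hq₁', hq₂']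

theorem ActsTo.comp_left {p₁ p₂ p p₁' p₂' p' : G₁.Pth} {q q₂' q' : G₂.Pth}
    (hp : G₁.IsComp p₁ p₂ p) (h₂ : ActsTo R p₂ q q₂' p₂') (h₁ : ActsTo R p₁ q₂' q' p₁')
    (hp' : G₁.IsComp p₁' p₂' p') : ActsTo R p q q' p' := by
  obtain ⟨sq₂, hq₂', hp₂'⟩ := actsTo_iff.1 h₂
  obtain ⟨sq₁, hq', hp₁'⟩ := actsTo_iff.1 h₁
  rw [h₂.r_eq_right, h₂.s_eq_right, hp.1, ← hp.r_eq] at sq₁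
  rw [← hp.s_eq] at sq₂
  refine actsTo_iff.2 ⟨sq₂.vert_comp sq₁ (hp.lift₁ q.r) (hp'.lift₁ q.s), hq'.trans hq₂', ?_⟩
  rw [hp'.colors_eq, hp.colors_eq, hp₁', hp₂']

end Actions

open ColoredGraph in
/-- In a quasi-product, the induced path actions satisfy, for
`q = q¹q²` and `p = p¹p²`:
`p ▷ (q¹q²) = (p ▷ q¹)((q¹ ◁ p) ▷ q²)` with `(q¹q²) ◁ p = q² ◁ (q¹ ◁ p)`, and
`(p¹p²) ▷ q = p¹ ▷ (p² ▷ q)` with `q ◁ (p¹p²) = ((p² ▷ q) ◁ p¹)(q ◁ p²)`. -/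
theorem stmt7 {k₁ k₂ : ℕ} (Q : QuasiProduct k₁ k₂) :
    (∀ (p : Q.G₁.Pth) (q1 q2 q : Q.G₂.Pth) (q1' : Q.G₂.Pth) (p1' : Q.G₁.Pth)
        (q2' : Q.G₂.Pth) (p2' : Q.G₁.Pth) (q' : Q.G₂.Pth),
      Q.G₂.IsComp q1 q2 q →
      ActsTo Q.rOmega p q1 q1' p1' →
      ActsTo Q.rOmega p1' q2 q2' p2' →
      Q.G₂.IsComp q1' q2' q' →
      ActsTo Q.rOmega p q q' p2') ∧
    (∀ (p1 p2 p : Q.G₁.Pth) (q : Q.G₂.Pth) (qa : Q.G₂.Pth) (pa : Q.G₁.Pth)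
        (qb : Q.G₂.Pth) (pb : Q.G₁.Pth) (p' : Q.G₁.Pth),
      Q.G₁.IsComp p1 p2 p →
      ActsTo Q.rOmega p2 q qa pa →
      ActsTo Q.rOmega p1 qa qb pb →
      Q.G₁.IsComp pb pa p' →
      ActsTo Q.rOmega p q qb p') :=
  ⟨fun _ _ _ _ _ _ _ _ _ hq h₁ h₂ hq' => ActsTo.comp_right hq h₁ h₂ hq',
    fun _ _ _ _ _ _ _ _ _ hp h₂ h₁ hp' => ActsTo.comp_left hp h₂ h₁ hp'⟩
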